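/- For coprime positive integers p, q, the classical Dedekind sum exponential identity holds: \sum_{0 < p < q, \gcd(p,q)=1} \exp(2\pi i \cdot 12 s(p,q)) = \sum_{p \in (\mathbb{Z}/q\mathbb{Z})^*} \exp\left(2\pi i \frac{p + p^{-1}}{q}\right), i.e., the sum over residues coprime to q of e(12 s(p,q)) equals the Kloosterman sum K(1,1;q). -/

import Mathlib

/-! For `p` prime to `q` put `r_k = p k mod q`. For `0 < k < q` the sawtooth values are `k/q - 1/2`
and `r_k/q - 1/2`, and `k ↦ r_k` permutes `range q`, so `12 q² s(p,q) = 12 ∑ k r_k - 3 q² (q - 1)`.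
Since `q² ∣ (p k - r_k)²` and `∑ r_k² = ∑ k²`, we get `2 p ∑ k r_k ≡ (p² + 1) ∑ k² (mod q²)`;
multiplying by `6`, evaluating `6 ∑ k²` and using `p p' ≡ 1 (mod q)` turns this into
`12 ∑ k r_k ≡ q (p + p') (mod q²)`. Hence `12 s(p,q) - (p + p')/q` is an integer, and the two sums
agree term by term once `p` is matched with the unit `p mod q`. -/

open Complex

/-- The sawtooth function `((x))`. -/
noncomputable def sawtooth (x : ℝ) : ℝ :=
  if Int.fract x = 0 then 0 else Int.fract x - 1/2

/-- The classical Dedekind sum `s(p,q)`. -/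
noncomputable def dedekindSum (p q : ℕ) : ℝ :=
  ∑ k ∈ Finset.range q, sawtooth (k / q) * sawtooth (p * k / q)

open Finset

theorem Finset.sum_range_mul_mod {M : Type*} [AddCommMonoid M] {p q : ℕ} (hp : p.Coprime q)
    (f : ℕ → M) : ∑ k ∈ range q, f (p * k % q) = ∑ k ∈ range q, f k := by
  have hmaps : ∀ k ∈ range q, p * k % q ∈ range q := fun k hk =>
    mem_range.2 (Nat.mod_lt _ (Nat.pos_of_ne_zero (by rintro rfl; simp at hk)))
  have hinj : Set.InjOn (fun k => p * k % q) (range q) := fun a ha b hb hab =>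
    (Nat.ModEq.cancel_left_of_coprime hp.symm hab).eq_of_lt_of_lt
      (mem_range.1 ha) (mem_range.1 hb)
  exact sum_nbij _ hmaps hinj (surjOn_of_injOn_of_card_le _ hmaps hinj le_rfl) fun _ _ => rfl

theorem two_mul_sum_range_natCast (R : Type*) [CommRing R] (n : ℕ) :
    2 * ∑ k ∈ range n, (k : R) = n * (n - 1) := by
  induction n with
  | zero => simp
  | succ n ih => rw [sum_range_succ, mul_add, ih]; push_cast; ring

theorem six_mul_sum_range_natCast_sq (R : Type*) [CommRing R] (n : ℕ) :
    6 * ∑ k ∈ range n, (k : R) ^ 2 = n * (n - 1) * (2 * n - 1) := by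
  induction n with
  | zero => simp
  | succ n ih => rw [sum_range_succ, mul_add, ih]; push_cast; ring

def sumMulMod (p q : ℕ) : ℕ := ∑ k ∈ range q, k * (p * k % q)

theorem sq_dvd_sub_natCast_mod_sq (a q : ℕ) : (q : ℤ) ^ 2 ∣ ((a : ℤ) - (a % q : ℕ)) ^ 2 :=
  pow_dvd_pow_of_dvd (by rw [Int.natCast_mod]; exact (Int.mod_modEq _ _).dvd) 2

theorem sq_dvd_sum_sq_sub_sumMulMod {p q : ℕ} (hp : p.Coprime q) :
    (q : ℤ) ^ 2 ∣ (p ^ 2 + 1) * ∑ k ∈ range q, (k : ℤ) ^ 2 - 2 * p * sumMulMod p q := by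
  have hr : ∑ k ∈ range q, ((p * k % q : ℕ) : ℤ) ^ 2 = ∑ k ∈ range q, (k : ℤ) ^ 2 :=
    sum_range_mul_mod hp fun k => (k : ℤ) ^ 2
  have hexpand : (p ^ 2 + 1) * ∑ k ∈ range q, (k : ℤ) ^ 2 - 2 * p * sumMulMod p q =
      ∑ k ∈ range q, (((p * k : ℕ) : ℤ) - (p * k % q : ℕ)) ^ 2 := by
    rw [sumMulMod, Nat.cast_sum, add_mul, one_mul, mul_sum, mul_sum, ← hr,
      ← sum_add_distrib, ← sum_sub_distrib]
    exact sum_congr rfl fun k _ => by push_cast; ring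
  rw [hexpand]
  exact dvd_sum fun k _ => sq_dvd_sub_natCast_mod_sq _ _

theorem sq_dvd_twelve_mul_sumMulMod_sub {p p' q : ℕ} (h : p * p' ≡ 1 [MOD q]) :
    (q : ℤ) ^ 2 ∣ 12 * sumMulMod p q - q * (p + p') := by
  have hp : p.Coprime q := Nat.coprime_of_mul_modEq_one p' h
  obtain ⟨a, ha⟩ := sq_dvd_sum_sq_sub_sumMulMod hp
  obtain ⟨c, hc⟩ := Nat.modEq_iff_dvd.1 h.symm
  have hsq := six_mul_sum_range_natCast_sq ℤ q
  refine ((Nat.isCoprime_iff_coprime.2 hp.symm).pow_left (m := 2)).dvd_of_dvd_mul_left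
    ⟨(p ^ 2 + 1) * (2 * q - 3) - 6 * a - c, ?_⟩
  push_cast at hc
  linear_combination (-6) * ha + (p ^ 2 + 1) * hsq - q * hc

theorem sawtooth_natCast_div {q n : ℕ} (hq : q ≠ 0) (hn : ¬q ∣ n) :
    sawtooth (n / q) = (n % q : ℕ) / q - 1 / 2 := by
  have hmod : ((n % q : ℕ) : ℝ) ≠ 0 := Nat.cast_ne_zero.2 fun h => hn (Nat.dvd_of_mod_eq_zero h)
  rw [sawtooth, Int.fract_div_natCast_eq_div_natCast_mod, if_neg (by positivity)]

theorem sawtooth_mul_sawtooth {p q k : ℕ} (hp : p.Coprime q) (hk : k < q) :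
    sawtooth (k / q) * sawtooth (p * k / q) =
      (k / q - 1 / 2) * ((p * k % q : ℕ) / q - 1 / 2) - if k = 0 then 1 / 4 else 0 := by
  rcases eq_or_ne k 0 with rfl | hk0
  · norm_num [sawtooth]
  have hk_dvd : ¬q ∣ k := Nat.not_dvd_of_pos_of_lt (Nat.pos_of_ne_zero hk0) hk
  have hpk_dvd : ¬q ∣ p * k := by rwa [hp.symm.dvd_mul_left]
  have hq : q ≠ 0 := by omega
  rw [sawtooth_natCast_div hq hk_dvd, ← Nat.cast_mul, sawtooth_natCast_div hq hpk_dvd,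
    Nat.mod_eq_of_lt hk, if_neg hk0, sub_zero]

theorem twelve_mul_sq_mul_dedekindSum {p q : ℕ} (hp : p.Coprime q) :
    12 * q ^ 2 * dedekindSum p q = 12 * sumMulMod p q - 3 * q ^ 2 * (q - 1) := by
  rcases eq_or_ne q 0 with rfl | hq
  · simp [dedekindSum, sumMulMod]
  have hsum : dedekindSum p q =
      ∑ k ∈ range q, ((k : ℝ) / q - 1 / 2) * ((p * k % q : ℕ) / q - 1 / 2) - 1 / 4 := by
    rw [dedekindSum, sum_congr rfl fun k hk => sawtooth_mul_sawtooth hp (mem_range.1 hk),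
      sum_sub_distrib, sum_ite_eq' (range q) 0, if_pos (mem_range.2 (Nat.pos_of_ne_zero hq))]
  have hterm : ∀ k ∈ range q,
      12 * (q : ℝ) ^ 2 * (((k : ℝ) / q - 1 / 2) * ((p * k % q : ℕ) / q - 1 / 2)) =
        12 * (k * (p * k % q : ℕ) : ℕ) - 6 * q * k - 6 * q * (p * k % q : ℕ) + 3 * q ^ 2 := by
    intro k _
    push_cast
    field_simp
    ring
  have hr : ∑ k ∈ range q, ((p * k % q : ℕ) : ℝ) = ∑ k ∈ range q, (k : ℝ) :=
    sum_range_mul_mod hp fun k => (k : ℝ)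
  have hgauss := two_mul_sum_range_natCast ℝ q
  rw [hsum, mul_sub, mul_sum, sum_congr rfl hterm]
  simp only [sum_add_distrib, sum_sub_distrib, ← mul_sum, hr, sum_const, card_range, nsmul_eq_mul,
    sumMulMod, Nat.cast_sum]
  push_cast
  linear_combination (-6 * (q : ℝ)) * hgauss

theorem exists_twelve_mul_dedekindSum_eq {p p' q : ℕ} (h : p * p' ≡ 1 [MOD q]) :
    ∃ n : ℤ, 12 * dedekindSum p q = (p + p') / q + n := by
  rcases eq_or_ne q 0 with rfl | hq
  · exact ⟨0, by simp [dedekindSum]⟩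
  obtain ⟨m, hm⟩ := sq_dvd_twelve_mul_sumMulMod_sub h
  have hded := twelve_mul_sq_mul_dedekindSum (Nat.coprime_of_mul_modEq_one p' h)
  have hmR : (12 * sumMulMod p q - q * (p + p') : ℝ) = q ^ 2 * m := by exact_mod_cast hm
  have hqR : (q : ℝ) ≠ 0 := Nat.cast_ne_zero.2 hq
  refine ⟨m - 3 * (q - 1), ?_⟩
  rw [div_add' _ _ _ hqR, eq_div_iff hqR]
  refine mul_left_cancel₀ hqR ?_
  push_cast
  linear_combination hded + hmR

theorem ZMod.sum_units_eq_sum_coprime {M : Type*} [AddCommMonoid M] {q : ℕ} [NeZero q]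
    (f : ZMod q → M) :
    ∑ u : (ZMod q)ˣ, f u = ∑ p ∈ (range q).filter (fun p => p.Coprime q), f p := by
  refine sum_bij' (fun u _ => (u : ZMod q).val) (fun p hp => unitOfCoprime p (mem_filter.1 hp).2)
    (fun u _ => mem_filter.2 ⟨mem_range.2 (val_lt _), val_coe_unit_coprime u⟩)
    (fun _ _ => mem_univ _) (fun u _ => Units.ext (by simp)) (fun p hp => ?_)
    (fun u _ => by rw [natCast_zmod_val])
  simp [val_cast_of_lt (mem_range.1 (mem_filter.1 hp).1)]

/-- The sum of `e(12 s(p,q))` over residues `p` coprime to `q` equals the Kloosterman sum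
`K(1,1;q) = ∑_{p ∈ (ℤ/qℤ)^*} e((p + p⁻¹)/q)`. -/
theorem dedekind_kloosterman (q : ℕ) [NeZero q] :
    ∑ p ∈ (Finset.range q).filter (fun p => Nat.Coprime p q),
        Complex.exp (2 * Real.pi * I * (12 * dedekindSum p q : ℝ)) =
      ∑ u : (ZMod q)ˣ,
        Complex.exp (2 * Real.pi * I *
          ((((u : ZMod q).val : ℝ) + (((u⁻¹ : (ZMod q)ˣ) : ZMod q).val : ℝ)) / q)) := by
  simp_rw [← ZMod.inv_coe_unit]
  rw [ZMod.sum_units_eq_sum_coprime fun x : ZMod q =>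
    Complex.exp (2 * Real.pi * I * (((x.val : ℝ) + (x⁻¹.val : ℝ)) / q))]
  refine sum_congr rfl fun p hp => ?_
  obtain ⟨hpq, hcop⟩ := mem_filter.1 hp
  obtain ⟨n, hn⟩ := exists_twelve_mul_dedekindSum_eq (p' := ((p : ZMod q)⁻¹).val)
    ((ZMod.natCast_eq_natCast_iff _ _ _).1 (by exact_mod_cast ZMod.mul_val_inv hcop))
  rw [ZMod.val_cast_of_lt (mem_range.1 hpq), Complex.exp_eq_exp_iff_exists_int]
  exact ⟨n, by rw [hn]; push_cast; ring⟩
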